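/- Let n ≥ 2 be even and let 0 < q < 1. Set ω_μ = nq for μ = 1,…,n/2, ω_μ = −nq for μ = n/2+1,…,n, and k = (n, n, …, n). Then the number of distinct equilibria in Θ_{ω,k} is exactly 2^n − C(n, n/2), where C(n, n/2) is the central binomial coefficient; moreover, for every q > 0 the number of distinct equilibria of this family is at most 2^n − C(n, n/2). -/

import Mathlib

/-- `Θ_{ω,k}`: the set of equilibria of the rank-one coupled Kuramoto model lying in
`(-π,π]^n` and satisfying the output condition OC1. -/
def kuramotoEquilibria (n : ℕ) (ω k : Fin n → ℝ) : Set (Fin n → ℝ) :=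
  {θ | (∀ ν, θ ν ∈ Set.Ioc (-Real.pi) Real.pi) ∧
    (∀ ν, ω ν = (1 / (n : ℝ)) * ∑ μ, k ν * k μ * Real.sin (θ ν - θ μ)) ∧
    (∑ μ, k μ * Real.sin (θ μ) = 0 ∧ 0 ≤ ∑ μ, k μ * Real.cos (θ μ))}

/-!
With constant coupling, and once `∑ sin θ_μ = 0`, the equilibrium equations read
`sin θ_ν · ∑_μ cos θ_μ = ±q`. Hence all `sin θ_ν` equal `±sin α` for one `α ∈ (0, π/2)`, so each
`θ_ν` is `±α` or `±(π - α)`. If `A` is the set of oscillators with `cos θ_ν ≥ 0`, then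
`∑ cos θ_μ = (2|A| - n) cos α`, so equilibria correspond to sets `A` with `2|A| > n` together with
solutions `α ∈ (0, π/2)` of `sin 2α = 2q / (2|A| - n)`. There are at most two such `α`, and exactly
two when `q < 1`, because `n` even forces `2|A| - n ≥ 2`. Complementation shows that half of the
`2^n - C(n, n/2)` sets with `2|A| ≠ n` have `2|A| > n`.
-/

open Real Finset

theorem two_mul_card_filter_lt_two_mul_card_add_choose {α : Type*} [Fintype α] [DecidableEq α]
    (h : Even (Fintype.card α)) :
    2 * #{A : Finset α | Fintype.card α < 2 * #A} + (Fintype.card α).choose (Fintype.card α / 2)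
      = 2 ^ Fintype.card α := by
  set N := Fintype.card α
  have hcompl : #{A : Finset α | N < 2 * #A} = #{A : Finset α | 2 * #A < N} := by
    refine card_nbij' compl compl ?_ ?_ (fun A _ => compl_compl A) (fun A _ => compl_compl A) <;>
    · intro A hA
      have := A.card_le_univ
      simp only [coe_filter, mem_univ, true_and, Set.mem_ofPred_eq, card_compl] at hA ⊢
      omega
  have hmid : #{A : Finset α | 2 * #A = N} = N.choose (N / 2) := by
    obtain ⟨k, hk⟩ := h
    rw [show N.choose (N / 2) = #(powersetCard (N / 2) (univ : Finset α)) by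
      rw [card_powersetCard, card_univ], powersetCard_eq_filter, powerset_univ]
    congr 1
    ext A
    simp only [mem_filter, mem_univ, true_and]
    omega
  have hsplit : #{A : Finset α | N < 2 * #A} + #{A : Finset α | 2 * #A < N}
      + #{A : Finset α | 2 * #A = N} = 2 ^ N := by
    rw [← card_union_of_disjoint (disjoint_filter.2 fun A _ h1 h2 => by omega), ← filter_or,
      ← card_union_of_disjoint (disjoint_filter.2 fun A _ h1 h2 => by omega), ← filter_or,
      filter_true_of_mem fun A _ => by omega, card_univ, Fintype.card_finset]
  omega

/-- The two solutions `α ∈ (0, π/2)` of `sin (2 * α) = x` for `0 < x < 1`. -/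
noncomputable def halfArcsin (x : ℝ) (j : Bool) : ℝ :=
  if j then arcsin x / 2 else (π - arcsin x) / 2

lemma sin_two_mul_halfArcsin {x : ℝ} (hx : x ∈ Set.Icc (-1) 1) (j : Bool) :
    sin (2 * halfArcsin x j) = x := by
  have h := sin_arcsin hx.1 hx.2
  cases j
  · rw [halfArcsin, if_neg Bool.false_ne_true, mul_div_cancel₀ _ two_ne_zero, sin_pi_sub, h]
  · rw [halfArcsin, if_pos rfl, mul_div_cancel₀ _ two_ne_zero, h]

lemma halfArcsin_mem_Ioo {x : ℝ} (hx : x ∈ Set.Ioc 0 1) (j : Bool) :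
    halfArcsin x j ∈ Set.Ioo 0 (π / 2) := by
  have h0 : 0 < arcsin x := arcsin_pos.2 hx.1
  have h1 := arcsin_le_pi_div_two x
  cases j <;> simp only [halfArcsin, Bool.false_eq_true, if_false, if_true, Set.mem_Ioo] <;>
    constructor <;> linarith

lemma halfArcsin_injective {x : ℝ} (hx : x < 1) : Function.Injective (halfArcsin x) := by
  have := arcsin_lt_pi_div_two.2 hx
  intro j j' h
  cases j <;> cases j' <;> simp only [halfArcsin, Bool.false_eq_true, if_false, if_true] at h <;>
    first | rfl | linarith

lemma exists_halfArcsin_sin_two_mul_eq {α : ℝ} (hα : α ∈ Set.Ioo 0 (π / 2)) :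
    ∃ j, halfArcsin (sin (2 * α)) j = α := by
  obtain ⟨h0, h1⟩ := hα
  by_cases hα4 : α ≤ π / 4
  · refine ⟨true, ?_⟩
    rw [halfArcsin, if_pos rfl, arcsin_sin (by linarith) (by linarith)]
    ring
  · refine ⟨false, ?_⟩
    rw [halfArcsin, if_neg Bool.false_ne_true, ← sin_pi_sub,
      arcsin_sin (by linarith) (by linarith)]
    ring

lemma sum_sin_sub {ι : Type*} (s : Finset ι) (θ : ι → ℝ) (x : ℝ) :
    ∑ μ ∈ s, sin (x - θ μ) = sin x * ∑ μ ∈ s, cos (θ μ) - cos x * ∑ μ ∈ s, sin (θ μ) := by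
  simp only [sin_sub, sum_sub_distrib, mul_sum]

lemma eq_of_sin_eq_of_cos_eq {x y : ℝ} (hx : x ∈ Set.Ioc (-π) π) (hy : y ∈ Set.Ioc (-π) π)
    (hs : sin x = sin y) (hc : cos x = cos y) : x = y := by
  rw [← Complex.arg_cos_add_sin_mul_I hx, ← Complex.arg_cos_add_sin_mul_I hy]
  push_cast [← Complex.ofReal_sin, ← Complex.ofReal_cos, hs, hc]
  rfl

lemma mem_kuramotoEquilibria_const_iff {n : ℕ} {ω : Fin n → ℝ} {κ : ℝ} (hκ : 0 < κ)
    {θ : Fin n → ℝ} :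
    θ ∈ kuramotoEquilibria n ω (fun _ => κ) ↔
      (∀ ν, θ ν ∈ Set.Ioc (-π) π) ∧ ∑ μ, sin (θ μ) = 0 ∧ 0 ≤ ∑ μ, cos (θ μ) ∧
      ∀ ν, ω ν = κ ^ 2 / n * (sin (θ ν) * ∑ μ, cos (θ μ)) := by
  have hcoupling : ∀ ν, 1 / (n : ℝ) * ∑ μ, κ * κ * sin (θ ν - θ μ)
      = κ ^ 2 / n * (sin (θ ν) * ∑ μ, cos (θ μ) - cos (θ ν) * ∑ μ, sin (θ μ)) := by
    intro ν
    rw [← mul_sum, sum_sin_sub]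
    ring
  simp only [kuramotoEquilibria, Set.mem_ofPred_eq, hcoupling]
  simp only [← mul_sum, mul_eq_zero, hκ.ne', false_or, mul_nonneg_iff_of_pos_left hκ]
  constructor
  · rintro ⟨hθ, hω, hS, hC⟩
    exact ⟨hθ, hS, hC, fun ν => by simpa [hS] using hω ν⟩
  · rintro ⟨hθ, hS, hC, hω⟩
    exact ⟨hθ, fun ν => by simpa [hS] using hω ν, hS, hC⟩

lemma sum_ite_neg {n : ℕ} (P : Fin n → Prop) [DecidablePred P] (c : ℝ) :
    ∑ ν, (if P ν then c else -c) = (2 * #{ν | P ν} - n) * c := by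
  have hcard := card_filter_add_card_filter_not (s := univ) P
  rw [card_univ, Fintype.card_fin] at hcard
  have hcard' : (#{ν | P ν} + #{ν | ¬P ν} : ℝ) = n := by exact_mod_cast hcard
  rw [sum_ite, sum_const, sum_const, nsmul_eq_mul, nsmul_eq_mul]
  linear_combination -c * hcard'

section Bimodal

variable {n : ℕ} (p : Fin n → Prop) [DecidablePred p]

def bimodalFrequencies (q : ℝ) : Fin n → ℝ :=
  fun μ => if p μ then (n : ℝ) * q else -((n : ℝ) * q)

lemma mem_kuramotoEquilibria_bimodal_iff (hn : n ≠ 0) {q : ℝ} {θ : Fin n → ℝ} :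
    θ ∈ kuramotoEquilibria n (bimodalFrequencies p q) (fun _ => n) ↔
      (∀ ν, θ ν ∈ Set.Ioc (-π) π) ∧ ∑ μ, sin (θ μ) = 0 ∧ 0 ≤ ∑ μ, cos (θ μ) ∧
      ∀ ν, sin (θ ν) * ∑ μ, cos (θ μ) = if p ν then q else -q := by
  have hn' : (n : ℝ) ≠ 0 := Nat.cast_ne_zero.2 hn
  have hfreq : ∀ ν (x : ℝ), bimodalFrequencies p q ν = (n : ℝ) ^ 2 / n * x ↔
      x = if p ν then q else -q := by
    intro ν x
    rw [sq, mul_div_cancel_right₀ _ hn', bimodalFrequencies, eq_comm]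
    split_ifs
    · exact mul_right_inj' hn'
    · rw [← mul_neg]
      exact mul_right_inj' hn'
  simp only [mem_kuramotoEquilibria_const_iff (Nat.cast_pos.2 (Nat.pos_of_ne_zero hn)), hfreq]

noncomputable def configuration (A : Finset (Fin n)) (α : ℝ) : Fin n → ℝ :=
  fun ν => if p ν then (if ν ∈ A then α else π - α) else -(if ν ∈ A then α else π - α)

variable {p}

lemma sin_configuration (A : Finset (Fin n)) (α : ℝ) (ν : Fin n) :
    sin (configuration p A α ν) = if p ν then sin α else -sin α := by
  unfold configuration
  split_ifs <;> simp only [sin_neg, sin_pi_sub]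

lemma cos_configuration (A : Finset (Fin n)) (α : ℝ) (ν : Fin n) :
    cos (configuration p A α ν) = if ν ∈ A then cos α else -cos α := by
  unfold configuration
  split_ifs <;> simp only [cos_neg, cos_pi_sub]

lemma configuration_mem_Ioc (A : Finset (Fin n)) {α : ℝ} (hα : α ∈ Set.Ioo 0 π) (ν : Fin n) :
    configuration p A α ν ∈ Set.Ioc (-π) π := by
  obtain ⟨h0, h1⟩ := hα
  unfold configuration
  split_ifs <;> constructor <;> linarith

lemma sum_sin_configuration (hp : 2 * #{ν | p ν} = n) (A : Finset (Fin n)) (α : ℝ) :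
    ∑ ν, sin (configuration p A α ν) = 0 := by
  simp only [sin_configuration, sum_ite_neg, ← hp]
  push_cast
  ring

lemma sum_cos_configuration (A : Finset (Fin n)) (α : ℝ) :
    ∑ ν, cos (configuration p A α ν) = (2 * #A - n) * cos α := by
  simp only [cos_configuration, sum_ite_neg, filter_mem_eq_inter, univ_inter]

lemma configuration_mem_kuramotoEquilibria (hn : n ≠ 0) (hp : 2 * #{ν | p ν} = n)
    {A : Finset (Fin n)} (hA : n ≤ 2 * #A) {α q : ℝ} (hα : α ∈ Set.Ioo 0 (π / 2))
    (hq : sin (2 * α) * (2 * #A - n) = 2 * q) :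
    configuration p A α ∈ kuramotoEquilibria n (bimodalFrequencies p q) (fun _ => n) := by
  have hm : (0 : ℝ) ≤ 2 * #A - n := by
    rw [sub_nonneg]
    exact_mod_cast hA
  have hcos : 0 ≤ cos α := cos_nonneg_of_mem_Icc ⟨by linarith [hα.1, pi_pos], hα.2.le⟩
  refine (mem_kuramotoEquilibria_bimodal_iff p hn).2
    ⟨configuration_mem_Ioc A ⟨hα.1, by linarith [hα.2, pi_pos]⟩, sum_sin_configuration hp A α, ?_,
      fun ν => ?_⟩
  · rw [sum_cos_configuration]
    positivity
  · rw [sin_two_mul] at hq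
    rw [sum_cos_configuration, sin_configuration]
    split_ifs <;> linarith

lemma eq_configuration {θ : Fin n → ℝ} (hθ : ∀ ν, θ ν ∈ Set.Ioc (-π) π) {α : ℝ}
    (hα : α ∈ Set.Ioc 0 (π / 2)) (hsin : ∀ ν, sin (θ ν) = if p ν then sin α else -sin α) :
    θ = configuration p {ν | 0 ≤ cos (θ ν)} α := by
  have hcos : 0 ≤ cos α := cos_nonneg_of_mem_Icc ⟨by linarith [hα.1, pi_pos], hα.2⟩
  funext ν
  refine eq_of_sin_eq_of_cos_eq (hθ ν)
    (configuration_mem_Ioc _ ⟨hα.1, by linarith [hα.2, pi_pos]⟩ ν)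
    (by rw [hsin, sin_configuration]) ?_
  have habs : |cos (θ ν)| = cos α := by
    rw [← abs_of_nonneg hcos, ← sq_eq_sq_iff_abs_eq_abs, cos_sq', cos_sq', hsin]
    split_ifs <;> ring
  rw [cos_configuration]
  simp only [mem_filter, mem_univ, true_and]
  split_ifs with h
  · rw [← habs, abs_of_nonneg h]
  · rw [← habs, abs_of_neg (not_le.1 h), neg_neg]

lemma exists_eq_configuration (hn : n ≠ 0) {q : ℝ} (hq : 0 < q) {θ : Fin n → ℝ}
    (hθ : θ ∈ kuramotoEquilibria n (bimodalFrequencies p q) (fun _ => n)) :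
    ∃ (A : Finset (Fin n)) (α : ℝ), n < 2 * #A ∧ α ∈ Set.Ioo 0 (π / 2) ∧
      sin (2 * α) * (2 * #A - n) = 2 * q ∧ θ = configuration p A α := by
  obtain ⟨hIoc, -, hC, heq⟩ := (mem_kuramotoEquilibria_bimodal_iff p hn).1 hθ
  set C := ∑ μ, cos (θ μ)
  let ν₀ : Fin n := ⟨0, Nat.pos_of_ne_zero hn⟩
  have hCpos : 0 < C := by
    refine hC.lt_of_ne fun h => ?_
    have := heq ν₀
    rw [← h, mul_zero] at this
    split_ifs at this <;> linarith
  have hsin : ∀ ν, sin (θ ν) = if p ν then q / C else -(q / C) := by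
    intro ν
    have := heq ν
    split_ifs at this ⊢
    · rw [← this, mul_div_cancel_right₀ _ hCpos.ne']
    · rw [← neg_div, ← this, mul_div_cancel_right₀ _ hCpos.ne']
  set s := q / C
  have hs0 : 0 < s := div_pos hq hCpos
  have hs1 : s ≤ 1 := by
    have := abs_sin_le_one (θ ν₀)
    rw [hsin ν₀] at this
    split_ifs at this <;> simpa [abs_of_pos hs0] using this
  set α := arcsin s
  have hsinα : sin α = s := sin_arcsin (by linarith) hs1
  have hθA : θ = configuration p {ν | 0 ≤ cos (θ ν)} α :=
    eq_configuration hIoc ⟨arcsin_pos.2 hs0, arcsin_le_pi_div_two s⟩ (by simpa [hsinα] using hsin)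
  set A : Finset (Fin n) := {ν | 0 ≤ cos (θ ν)}
  have hCA : C = (2 * #A - n) * cos α := by
    rw [← sum_cos_configuration (p := p), ← hθA]
  have hcos0 : 0 ≤ cos α := cos_arcsin_nonneg s
  obtain ⟨hm, hcos⟩ : 0 < (2 * #A - n : ℝ) ∧ 0 < cos α := by
    rcases pos_and_pos_or_neg_and_neg_of_mul_pos (hCA ▸ hCpos) with h | h
    · exact h
    · linarith [h.2]
  refine ⟨A, α, by exact_mod_cast sub_pos.1 hm, ⟨arcsin_pos.2 hs0, ?_⟩, ?_, hθA⟩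
  · refine (arcsin_le_pi_div_two s).lt_of_ne fun h => hcos.ne' ?_
    rw [show α = π / 2 from h, cos_pi_div_two]
  · calc sin (2 * α) * (2 * #A - n) = 2 * s * C := by rw [sin_two_mul, hsinα, hCA]; ring
      _ = 2 * q := by rw [mul_assoc, div_mul_cancel₀ q hCpos.ne']

lemma configuration_injective (hn : n ≠ 0) {A A' : Finset (Fin n)} {α α' : ℝ}
    (hα : α ∈ Set.Ioo 0 (π / 2)) (hα' : α' ∈ Set.Ioo 0 (π / 2))
    (h : configuration p A α = configuration p A' α') : A = A' ∧ α = α' := by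
  have hmem : ∀ (B : Finset (Fin n)) (β : ℝ), β ∈ Set.Ioo 0 (π / 2) →
      ∀ ν, ν ∈ B ↔ 0 < cos (configuration p B β ν) := by
    intro B β hβ ν
    have hcos : 0 < cos β := cos_pos_of_mem_Ioo ⟨by linarith [hβ.1, pi_pos], hβ.2⟩
    rw [cos_configuration]
    split_ifs with hν <;> simp only [hν, hcos, false_iff, not_lt, neg_nonpos, hcos.le]
  refine ⟨?_, ?_⟩
  · ext ν
    rw [hmem A α hα, hmem A' α' hα', h]
  · have hs := congrArg sin (congrFun h ⟨0, Nat.pos_of_ne_zero hn⟩)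
    rw [sin_configuration, sin_configuration] at hs
    refine injOn_sin ⟨by linarith [hα.1, pi_pos], hα.2.le⟩
      ⟨by linarith [hα'.1, pi_pos], hα'.2.le⟩ ?_
    split_ifs at hs <;> linarith

variable (p) in
noncomputable def bimodalEquilibrium (q : ℝ) (x : Finset (Fin n) × Bool) : Fin n → ℝ :=
  configuration p x.1 (halfArcsin (2 * q / (2 * #x.1 - n)) x.2)

variable (n) in
def equilibriumLabels : Finset (Finset (Fin n) × Bool) :=
  ({A : Finset (Fin n) | n < 2 * #A} : Finset _) ×ˢ (univ : Finset Bool)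

lemma card_equilibriumLabels (hn : Even n) : #(equilibriumLabels n) = 2 ^ n - n.choose (n / 2) := by
  have := two_mul_card_filter_lt_two_mul_card_add_choose (α := Fin n) (by simpa using hn)
  simp only [Fintype.card_fin] at this
  rw [equilibriumLabels, card_product, card_univ, Fintype.card_bool]
  omega

lemma two_mul_div_card_sub_mem_Ioo (hn : Even n) {A : Finset (Fin n)} (hA : n < 2 * #A) {q : ℝ}
    (hq : 0 < q) (hq1 : q < 1) : 2 * q / (2 * #A - n) ∈ Set.Ioo 0 1 := by
  obtain ⟨k, rfl⟩ := hn
  have : (k + 1 : ℝ) ≤ #A := by exact_mod_cast (show k + 1 ≤ #A by omega)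
  have hm : (2 : ℝ) ≤ 2 * #A - ↑(k + k) := by push_cast; linarith
  exact ⟨by positivity, (div_lt_one (by linarith)).2 (by linarith)⟩

lemma kuramotoEquilibria_bimodal_subset_image (hn : n ≠ 0) {q : ℝ} (hq : 0 < q) :
    kuramotoEquilibria n (bimodalFrequencies p q) (fun _ => n) ⊆
      bimodalEquilibrium p q '' equilibriumLabels n := by
  intro θ hθ
  obtain ⟨A, α, hA, hα, hsin, rfl⟩ := exists_eq_configuration hn hq hθ
  obtain ⟨j, hj⟩ := exists_halfArcsin_sin_two_mul_eq hα
  have hm : (0 : ℝ) < 2 * #A - n := sub_pos.2 (by exact_mod_cast hA)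
  refine ⟨(A, j), by simp [equilibriumLabels, hA], ?_⟩
  rw [bimodalEquilibrium, ← hsin, mul_div_cancel_right₀ _ hm.ne', hj]

lemma image_bimodalEquilibrium_subset (hn : n ≠ 0) (hp : 2 * #{ν | p ν} = n) {q : ℝ}
    (hq : 0 < q) (hq1 : q < 1) :
    bimodalEquilibrium p q '' equilibriumLabels n ⊆
      kuramotoEquilibria n (bimodalFrequencies p q) (fun _ => n) := by
  rintro _ ⟨⟨A, j⟩, hA, rfl⟩
  simp only [equilibriumLabels, coe_product, Set.mem_prod, mem_coe, mem_filter, mem_univ,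
    true_and, and_true] at hA
  obtain ⟨hx0, hx1⟩ := two_mul_div_card_sub_mem_Ioo ⟨_, hp.symm.trans (two_mul _)⟩ hA hq hq1
  refine configuration_mem_kuramotoEquilibria hn hp hA.le (halfArcsin_mem_Ioo ⟨hx0, hx1.le⟩ j) ?_
  rw [sin_two_mul_halfArcsin ⟨by linarith, hx1.le⟩, div_mul_cancel₀]
  exact (sub_pos.2 (by exact_mod_cast hA)).ne'

lemma injOn_bimodalEquilibrium (hn : n ≠ 0) (heven : Even n) {q : ℝ} (hq : 0 < q) (hq1 : q < 1) :
    Set.InjOn (bimodalEquilibrium p q) (equilibriumLabels n) := by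
  rintro ⟨A, j⟩ hA ⟨A', j'⟩ hA' h
  simp only [equilibriumLabels, coe_product, Set.mem_prod, mem_coe, mem_filter, mem_univ,
    true_and, and_true] at hA hA'
  have hx := two_mul_div_card_sub_mem_Ioo heven hA hq hq1
  have hx' := two_mul_div_card_sub_mem_Ioo heven hA' hq hq1
  obtain ⟨rfl, hα⟩ := configuration_injective hn (halfArcsin_mem_Ioo ⟨hx.1, hx.2.le⟩ j)
    (halfArcsin_mem_Ioo ⟨hx'.1, hx'.2.le⟩ j') h
  rw [halfArcsin_injective hx.2 hα]

lemma ncard_kuramotoEquilibria_bimodal_le (hn : n ≠ 0) {q : ℝ} (hq : 0 < q) :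
    (kuramotoEquilibria n (bimodalFrequencies p q) (fun _ => n)).ncard ≤
      #(equilibriumLabels n) :=
  calc _ ≤ (bimodalEquilibrium p q '' equilibriumLabels n).ncard :=
        Set.ncard_le_ncard (kuramotoEquilibria_bimodal_subset_image hn hq) (Set.toFinite _)
    _ ≤ #(equilibriumLabels n) :=
        (Set.ncard_image_le (Set.toFinite _)).trans_eq (Set.ncard_coe_finset _)

lemma ncard_kuramotoEquilibria_bimodal (hn : n ≠ 0) (hp : 2 * #{ν | p ν} = n) {q : ℝ}
    (hq : 0 < q) (hq1 : q < 1) :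
    (kuramotoEquilibria n (bimodalFrequencies p q) (fun _ => n)).ncard =
      #(equilibriumLabels n) := by
  rw [(kuramotoEquilibria_bimodal_subset_image hn hq).antisymm
      (image_bimodalEquilibrium_subset hn hp hq hq1),
    (injOn_bimodalEquilibrium hn ⟨_, hp.symm.trans (two_mul _)⟩ hq hq1).ncard_image,
    Set.ncard_coe_finset]

end Bimodal

/-- Corollary 4.5: let `n ≥ 2` be even.  For
`ω = (nq,…,nq,-nq,…,-nq)` and `k = (n,…,n)`, the number of distinct equilibria in
`Θ_{ω,k}` equals `2^n - C(n, n/2)` whenever `0 < q < 1`, and for every `q > 0` this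
number is at most `2^n - C(n, n/2)`. -/
theorem card_equilibria_even_max (n : ℕ) (hn : 2 ≤ n) (heven : Even n) :
    (∀ q : ℝ, 0 < q → q < 1 →
      (kuramotoEquilibria n
          (fun μ => if (μ : ℕ) < n / 2 then (n : ℝ) * q else -((n : ℝ) * q))
          (fun _ => (n : ℝ))).ncard = 2 ^ n - n.choose (n / 2)) ∧
    (∀ q : ℝ, 0 < q →
      (kuramotoEquilibria n
          (fun μ => if (μ : ℕ) < n / 2 then (n : ℝ) * q else -((n : ℝ) * q))
          (fun _ => (n : ℝ))).ncard ≤ 2 ^ n - n.choose (n / 2)) := by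
  have hn0 : n ≠ 0 := by omega
  have hp : 2 * #{ν : Fin n | (ν : ℕ) < n / 2} = n := by
    rw [Fin.card_filter_val_lt]
    obtain ⟨k, rfl⟩ := heven
    omega
  rw [← card_equilibriumLabels heven]
  exact ⟨fun q hq hq1 => ncard_kuramotoEquilibria_bimodal hn0 hp hq hq1,
    fun q hq => ncard_kuramotoEquilibria_bimodal_le (p := fun ν : Fin n => (ν : ℕ) < n / 2) hn0 hq⟩
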